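/- Let n < m. The embryo model Z₀(n,m) : ℝⁿ → ℝᵐ defined by Z₀(y,z) = (y, z³ + 3|y|²z, ∫₀ᶻ (s² + |y|²)² ds, 0, …, 0) is injective on all of ℝⁿ, and its derivative at (y,z) is an injective linear map ℝⁿ → ℝᵐ if and only if (y,z) ≠ (0,0); that is, the singular set of Z₀(n,m) is exactly the origin. -/

import Mathlib

/-!
`Z₀` has the form `(y, z) ↦ (y, G (y, z))`, so its differential at `p` is injective exactly when
the partial derivative `∂G/∂z (p)` is nonzero. By the fundamental theorem of calculus
`∂G/∂z (y, z) = (3 (z² + |y|²), (z² + |y|²)², 0)`, which vanishes only at the origin.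
Injectivity holds because `z ↦ z³ + 3 |y|² z` is strictly increasing.
-/

/-- The embryo model `Z₀(n,m) : ℝⁿ → ℝᵐ`,
`Z₀(y,z) = (y, z³ + 3|y|²z, ∫₀ᶻ (s² + |y|²)² ds, 0, …, 0)`,
where `ℝⁿ = ℝ^{n−1} × ℝ` (so `k = n−1`) and the trailing zeros are collected
in a Euclidean factor (so `l = m − n − 1`). -/
noncomputable def Z0map (k l : ℕ) (p : EuclideanSpace ℝ (Fin k) × ℝ) :
    EuclideanSpace ℝ (Fin k) × ℝ × ℝ × EuclideanSpace ℝ (Fin l) :=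
  (p.1, p.2^3 + 3*‖p.1‖^2*p.2, ∫ s in (0:ℝ)..p.2, (s^2 + ‖p.1‖^2)^2, 0)

open Function

section Graph

variable {𝕜 E F : Type*} [NontriviallyNormedField 𝕜] [NormedAddCommGroup E] [NormedSpace 𝕜 E]
  [NormedAddCommGroup F] [NormedSpace 𝕜 F] {G : E × 𝕜 → F} {p : E × 𝕜} {v : F}

theorem HasDerivAt.fderiv_apply_zero_one (hG : DifferentiableAt 𝕜 G p)
    (hv : HasDerivAt (fun t => G (p.1, t)) v p.2) : fderiv 𝕜 G p (0, 1) = v := by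
  have hline : HasDerivAt (fun t : 𝕜 => (p.1, t)) ((0 : E), (1 : 𝕜)) p.2 :=
    (hasDerivAt_const _ _).prodMk (hasDerivAt_id _)
  exact (hG.hasFDerivAt.comp_hasDerivAt_of_eq p.2 hline rfl).unique hv

theorem injective_fderiv_graph_iff (hG : DifferentiableAt 𝕜 G p)
    (hv : HasDerivAt (fun t => G (p.1, t)) v p.2) :
    Injective (fderiv 𝕜 (fun q => (q.1, G q)) p) ↔ v ≠ 0 := by
  rw [differentiableAt_fst.fderiv_prodMk hG, fderiv_fst, ← hv.fderiv_apply_zero_one hG,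
    injective_iff_map_eq_zero]
  constructor
  · intro h hv0
    simpa using h (0, 1) (by simp [hv0])
  · rintro hv0 ⟨x, t⟩ hxt
    simp only [ContinuousLinearMap.prod_apply, ContinuousLinearMap.coe_fst', Prod.mk_eq_zero] at hxt
    obtain ⟨rfl, ht⟩ := hxt
    have hsmul : fderiv 𝕜 G p ((0 : E), t) = t • fderiv 𝕜 G p (0, 1) := by
      rw [← map_smul, Prod.smul_mk, smul_zero, smul_eq_mul, mul_one]
    rw [hsmul, smul_eq_zero] at ht
    simp [ht.resolve_right hv0]

end Graph

theorem strictMono_pow_three_add_mul {a : ℝ} (ha : 0 ≤ a) :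
    StrictMono fun z : ℝ => z ^ 3 + a * z :=
  (Odd.strictMono_pow (by decide)).add_monotone (monotone_id.const_mul ha)

theorem integral_sq_add_const_sq (c z : ℝ) :
    ∫ s in (0:ℝ)..z, (s ^ 2 + c) ^ 2 = z ^ 5 / 5 + 2 * c * z ^ 3 / 3 + c ^ 2 * z := by
  rw [intervalIntegral.integral_eq_sub_of_hasDerivAt
    (f := fun s => s ^ 5 / 5 + 2 * c * s ^ 3 / 3 + c ^ 2 * s) (fun s _ => ?_) ((by fun_prop : Continuous fun s : ℝ => (s ^ 2 + c) ^ 2).intervalIntegrable _ _)]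
  · ring
  · refine ((((hasDerivAt_pow 5 s).div_const 5).add
      (((hasDerivAt_pow 3 s).const_mul (2 * c)).div_const 3)).add
      ((hasDerivAt_id' s).const_mul (c ^ 2))).congr_deriv ?_
    norm_num
    ring

namespace Z0map

variable (k l : ℕ)

theorem injective : Injective (Z0map k l) := by
  intro p q h
  simp only [Z0map, Prod.mk.injEq] at h
  obtain ⟨h1, h2, -⟩ := h
  rw [h1] at h2
  exact Prod.ext h1 ((strictMono_pow_three_add_mul (by positivity)).injective h2)

theorem differentiable : Differentiable ℝ (Z0map k l) := by
  unfold Z0map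
  simp only [integral_sq_add_const_sq]
  have hnormSq : Differentiable ℝ fun q : EuclideanSpace ℝ (Fin k) × ℝ => ‖q.1‖ ^ 2 :=
    differentiable_fst.norm_sq ℝ
  fun_prop

theorem hasDerivAt_snd (y : EuclideanSpace ℝ (Fin k)) (z : ℝ) :
    HasDerivAt (fun t => (Z0map k l (y, t)).2)
      (3 * (z ^ 2 + ‖y‖ ^ 2), (z ^ 2 + ‖y‖ ^ 2) ^ 2, (0 : EuclideanSpace ℝ (Fin l))) z := by
  have hcubic : HasDerivAt (fun t : ℝ => t ^ 3 + 3 * ‖y‖ ^ 2 * t) (3 * (z ^ 2 + ‖y‖ ^ 2)) z := by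
    refine ((hasDerivAt_pow 3 z).add ((hasDerivAt_id' z).const_mul (3 * ‖y‖ ^ 2))).congr_deriv ?_
    norm_num
    ring
  have hintegral := ((by fun_prop : Continuous fun s : ℝ => (s ^ 2 + ‖y‖ ^ 2) ^ 2)
    |>.integral_hasStrictDerivAt 0 z).hasDerivAt
  exact hcubic.prodMk (hintegral.prodMk (hasDerivAt_const _ _))

end Z0map

theorem sq_add_norm_sq_eq_zero_iff {E : Type*} [NormedAddCommGroup E] {p : E × ℝ} :
    p.2 ^ 2 + ‖p.1‖ ^ 2 = 0 ↔ p = 0 := by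
  rw [add_eq_zero_iff_of_nonneg (sq_nonneg _) (sq_nonneg _), pow_eq_zero_iff two_ne_zero,
    pow_eq_zero_iff two_ne_zero, norm_eq_zero, and_comm, Prod.ext_iff]
  rfl

theorem Z0map_injective_and_fderiv_injective_iff_general (n m : ℕ) :
    Function.Injective (Z0map (n - 1) (m - n - 1)) ∧
    ∀ p : EuclideanSpace ℝ (Fin (n - 1)) × ℝ,
      (Function.Injective ⇑(fderiv ℝ (Z0map (n - 1) (m - n - 1)) p) ↔ p ≠ 0) := by
  refine ⟨Z0map.injective _ _, fun p => ?_⟩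
  refine (injective_fderiv_graph_iff ((Z0map.differentiable _ _).snd p)
    (Z0map.hasDerivAt_snd _ _ p.1 p.2)).trans ?_
  rw [ne_eq, ne_eq, ← sq_add_norm_sq_eq_zero_iff]
  simp [Prod.ext_iff]

/-- For `n < m`, the embryo model `Z₀(n,m)` is injective on all of `ℝⁿ`, and
its derivative at `(y,z)` is injective iff `(y,z) ≠ (0,0)`: its singular set
is exactly the origin. -/
theorem Z0map_injective_and_fderiv_injective_iff (n m : ℕ) (hn : 1 ≤ n) (hnm : n < m) :
    Function.Injective (Z0map (n - 1) (m - n - 1)) ∧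
    ∀ p : EuclideanSpace ℝ (Fin (n - 1)) × ℝ,
      (Function.Injective ⇑(fderiv ℝ (Z0map (n - 1) (m - n - 1)) p) ↔ p ≠ 0) :=
  Z0map_injective_and_fderiv_injective_iff_general n m
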